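/- Let S be a finite nonempty set and let β : S → ℝ satisfy β_u > 0 for all u ∈ S. Define a*_u = √β_u / ( Σ_{v∈S} √β_v ) for u ∈ S. Then a* is feasible (a*_u > 0 for all u and Σ_{u∈S} a*_u = 1), it attains Σ_{u∈S} β_u / a*_u = ( Σ_{u∈S} √β_u )^2, and consequently a* minimizes Σ_{u∈S} β_u / a_u over all a with a_u > 0 for all u ∈ S and Σ_{u∈S} a_u ≤ 1. -/
import Mathlib


/-- Theorem 3 of the paper: the proportional square-root allocation
`a* u = √(β u) / ∑ v, √(β v)` is feasible, attains the value `(∑ √β)^2`,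
and minimizes `∑ u, β u / a u` over all feasible allocations. -/
theorem optimal_resource_allocation {S : Type*} [Fintype S] [Nonempty S]
    (β : S → ℝ) (hβ : ∀ u, 0 < β u)
    (astar : S → ℝ)
    (hastar : ∀ u, astar u = Real.sqrt (β u) / ∑ v, Real.sqrt (β v)) :
    (∀ u, 0 < astar u) ∧ (∑ u, astar u = 1) ∧
    (∑ u, β u / astar u = (∑ u, Real.sqrt (β u))^2) ∧
    (∀ a : S → ℝ, (∀ u, 0 < a u) → (∑ u, a u ≤ 1) →
      ∑ u, β u / astar u ≤ ∑ u, β u / a u) := by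
  have hsq : ∀ u, 0 < Real.sqrt (β u) := fun u => Real.sqrt_pos.2 (hβ u)
  have hsum : 0 < ∑ v, Real.sqrt (β v) :=
    Finset.sum_pos (fun v _ => hsq v) Finset.univ_nonempty
  have hpos : ∀ u, 0 < astar u := fun u => by
    rw [hastar u]; exact div_pos (hsq u) hsum
  have hsum1 : ∑ u, astar u = 1 := by
    simp only [hastar]
    rw [← Finset.sum_div]
    exact div_self hsum.ne'
  have hval : ∑ u, β u / astar u = (∑ u, Real.sqrt (β u))^2 := by
    have h1 : ∀ u, β u / astar u = Real.sqrt (β u) * ∑ v, Real.sqrt (β v) := by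
      intro u
      rw [hastar u, div_div_eq_mul_div, div_eq_iff (hsq u).ne']
      nlinarith [Real.sq_sqrt (hβ u).le]
    simp only [h1]
    rw [← Finset.sum_mul, sq]
  refine ⟨hpos, hsum1, hval, ?_⟩
  intro a ha hale
  rw [hval]
  have key : (∑ u, Real.sqrt (β u))^2 ≤ (∑ u, β u / a u) * ∑ u, a u := by
    have := Finset.sum_mul_sq_le_sq_mul_sq Finset.univ
      (fun u => Real.sqrt (β u / a u)) (fun u => Real.sqrt (a u))
    calc (∑ u, Real.sqrt (β u))^2
        = (∑ u, Real.sqrt (β u / a u) * Real.sqrt (a u))^2 := by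
          congr 1; apply Finset.sum_congr rfl; intro u _
          rw [← Real.sqrt_mul (div_pos (hβ u) (ha u)).le, div_mul_cancel₀ _ (ha u).ne']
      _ ≤ (∑ u, Real.sqrt (β u / a u)^2) * ∑ u, Real.sqrt (a u)^2 := this
      _ = (∑ u, β u / a u) * ∑ u, a u := by
          congr 1 <;> apply Finset.sum_congr rfl <;> intro u _ <;>
            first | rw [Real.sq_sqrt (div_pos (hβ u) (ha u)).le] | rw [Real.sq_sqrt (ha u).le]
  calc (∑ u, Real.sqrt (β u))^2 ≤ (∑ u, β u / a u) * ∑ u, a u := key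
    _ ≤ (∑ u, β u / a u) * 1 := by
        apply mul_le_mul_of_nonneg_left hale
        exact Finset.sum_nonneg fun u _ => (div_pos (hβ u) (ha u)).le
    _ = ∑ u, β u / a u := mul_one _
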